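/- arXiv:1408.1463 — 3 statements merged into one kernel-verified Lean document; each statement's English description precedes it below -/
import Mathlib

section
/- Let V be the binary string of length n with ones exactly at positions x_1 < ... < x_r. Then V is non-invertible under cyclic convolution over F_2 if and only if n is a multiple of the period length of some nonzero purely periodic solution to the recurrence L(i) = Σ_{l=2}^{r} L(i - (x_l - x_1)) (mod 2). -/
open Finset

/-!
A string `V` is non-invertible exactly when `W ↦ V ⊠ W` has a nonzero kernel, since a linear
map of a finite space is injective iff surjective. When `V` is the indicator of the positions
`x l`, the equation `V ⊠ W = 0` read at `j = i + x 0` says that `L i := W i` satisfies the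
recurrence (over `F₂`, `a = b` iff `a + b = 0`). Hence kernel elements are the same as
`n`-periodic solutions, and a solution is `n`-periodic exactly when its minimal period divides `n`.
-/

/-- Cyclic convolution over `F₂` of two binary strings of length `n`. -/
def conv {n : ℕ} [NeZero n] (V W : ZMod n → ZMod 2) : ZMod n → ZMod 2 :=
  fun j => ∑ s : ZMod n, V s * W (j - s)

open Function

section Convolution

variable {n : ℕ} [NeZero n]

lemma conv_sub (V W₁ W₂ : ZMod n → ZMod 2) :
    conv V (W₁ - W₂) = conv V W₁ - conv V W₂ := by
  funext j
  simp [conv, mul_sub, sum_sub_distrib]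

lemma conv_delta_left (W : ZMod n → ZMod 2) :
    conv (fun j => if j = 0 then 1 else 0) W = W := by
  funext j
  rw [conv, sum_eq_single 0] <;> simp +contextual

lemma conv_conv_swap (A B C : ZMod n → ZMod 2) :
    conv (conv A B) C = conv B (conv A C) := by
  funext j
  simp only [conv, sum_mul, mul_sum]
  rw [sum_comm]
  conv_rhs => rw [sum_comm]
  refine sum_congr rfl fun t _ => ?_
  rw [← Equiv.sum_comp (Equiv.addRight t) (fun s => A t * B (s - t) * C (j - s))]
  refine sum_congr rfl fun u _ => ?_
  simp only [Equiv.coe_addRight, add_sub_cancel_right, sub_sub]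
  ring

lemma not_exists_conv_eq_delta_iff (V : ZMod n → ZMod 2) :
    (¬ ∃ W : ZMod n → ZMod 2, conv V W = fun j => if j = 0 then 1 else 0) ↔
      ∃ W : ZMod n → ZMod 2, W ≠ 0 ∧ conv V W = 0 := by
  constructor
  · intro h
    have hnot_inj : ¬ Injective (conv V) := by
      rw [Finite.injective_iff_surjective]
      exact fun hsurj => h (hsurj _)
    simp only [Injective, not_forall] at hnot_inj
    obtain ⟨W₁, W₂, heq, hne⟩ := hnot_inj
    exact ⟨W₁ - W₂, sub_ne_zero.mpr hne, by rw [conv_sub, heq, sub_self]⟩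
  · rintro ⟨W, hW, hVW⟩ ⟨U, hVU⟩
    apply hW
    rw [← conv_delta_left W, ← hVU, conv_conv_swap, hVW]
    funext j
    simp [conv]

lemma conv_indicator_eq_sum {r : ℕ} {c : Fin r → ZMod n} (hc : Injective c)
    {V : ZMod n → ZMod 2} (hV : ∀ s, V s = if ∃ i, c i = s then 1 else 0)
    (W : ZMod n → ZMod 2) (j : ZMod n) :
    conv V W j = ∑ l, W (j - c l) := by
  have hterm : ∀ s, V s * W (j - s) = if s ∈ univ.image c then W (j - s) else 0 := by
    intro s
    simp only [hV, mem_image, mem_univ, true_and]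
    split_ifs <;> simp
  simp only [conv, hterm]
  rw [sum_ite_mem, univ_inter, sum_image fun a _ b _ h => hc h]

end Convolution

lemma Function.Periodic.exists_minimal_period_dvd {α : Type*} {L : ℕ → α} {n : ℕ}
    (hn : 0 < n) (hL : Periodic L n) :
    ∃ p, 0 < p ∧ Periodic L p ∧ (∀ d, 0 < d → Periodic L d → p ≤ d) ∧ p ∣ n := by
  classical
  have hex : ∃ d, 0 < d ∧ Periodic L d := ⟨n, hn, hL⟩
  obtain ⟨hp, hLp⟩ := Nat.find_spec hex
  have hmin : ∀ d, 0 < d → Periodic L d → Nat.find hex ≤ d :=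
    fun d hd hLd => Nat.find_min' hex ⟨hd, hLd⟩
  refine ⟨Nat.find hex, hp, hLp, hmin, Nat.dvd_of_mod_eq_zero ?_⟩
  have hLmod : Periodic L (n % Nat.find hex) := fun i => by
    rw [← (hLp.nat_mul (n / Nat.find hex)) (i + _), Nat.cast_id, add_assoc, Nat.mod_add_div',
      hL]
  by_contra hne
  exact (Nat.mod_lt _ hp).not_ge (hmin _ (Nat.pos_of_ne_zero hne) hLmod)

def SatisfiesRecurrence {r : ℕ} [NeZero r] (x : Fin r → ℕ) (L : ℕ → ZMod 2) : Prop :=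
  ∀ i, (∀ l, x l - x 0 ≤ i) → L i = ∑ l ∈ univ.erase (0 : Fin r), L (i - (x l - x 0))

lemma satisfiesRecurrence_iff {r : ℕ} [NeZero r] (x : Fin r → ℕ) (L : ℕ → ZMod 2) :
    SatisfiesRecurrence x L ↔
      ∀ i, (∀ l, x l - x 0 ≤ i) → ∑ l, L (i - (x l - x 0)) = 0 := by
  refine forall₂_congr fun i _ => ?_
  rw [← add_sum_erase _ _ (mem_univ 0), Nat.sub_self, Nat.sub_zero, CharTwo.add_eq_zero]

lemma conv_eq_zero_iff_satisfiesRecurrence {n r : ℕ} [NeZero n] [NeZero r] {x : Fin r → ℕ}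
    (hmono : StrictMono x) (hlt : ∀ i, x i < n) {V : ZMod n → ZMod 2}
    (hV : ∀ s, V s = if ∃ i : Fin r, ((x i : ℕ) : ZMod n) = s then 1 else 0)
    {W : ZMod n → ZMod 2} {L : ℕ → ZMod 2} (hWL : ∀ i : ℕ, W i = L i) :
    conv V W = 0 ↔ SatisfiesRecurrence x L := by
  have hinj : Injective fun l => ((x l : ℕ) : ZMod n) := fun a b h => hmono.injective <| by
    simpa [ZMod.val_cast_of_lt (hlt a), ZMod.val_cast_of_lt (hlt b)] using congrArg ZMod.val h
  have hshift : ∀ l (i : ℕ), (x l - x 0 : ℕ) ≤ i →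
      ((i - (x l - x 0) : ℕ) : ZMod n) = (i + x 0 : ZMod n) - x l := fun l i hi => by
    rw [Nat.cast_sub hi, Nat.cast_sub (hmono.monotone (Fin.zero_le l))]
    ring
  rw [satisfiesRecurrence_iff, funext_iff]
  simp only [conv_indicator_eq_sum hinj hV, Pi.zero_apply]
  constructor
  · intro h i hi
    rw [← h (i + x 0)]
    exact sum_congr rfl fun l _ => by rw [← hWL, hshift l i (hi l)]
  · intro h j
    -- `i` is a representative of `j - x 0` large enough for every term of the recurrence.
    set i := (j - x 0).val + n
    have hi : ∀ l, x l - x 0 ≤ i := fun l => by have := hlt l; omega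
    have hj : (i + x 0 : ZMod n) = j := by simp [i]
    rw [← h i hi]
    exact sum_congr rfl fun l _ => by rw [← hWL, hshift l i (hi l), hj]

theorem stmt5 (n r : ℕ) [NeZero n] [NeZero r] (x : Fin r → ℕ)
    (hmono : StrictMono x) (hlt : ∀ i, x i < n)
    (V : ZMod n → ZMod 2)
    (hV : ∀ s, V s = if ∃ i : Fin r, ((x i : ℕ) : ZMod n) = s then 1 else 0) :
    (¬ ∃ W : ZMod n → ZMod 2,
        conv V W = fun j => if j = 0 then 1 else 0) ↔
      ∃ (L : ℕ → ZMod 2) (p : ℕ), 0 < p ∧ L ≠ 0 ∧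
        (∀ i, (∀ l, x l - x 0 ≤ i) →
          L i = ∑ l ∈ Finset.univ.erase (0 : Fin r), L (i - (x l - x 0))) ∧
        (∀ i, L (i + p) = L i) ∧
        (∀ d, 0 < d → (∀ i, L (i + d) = L i) → p ≤ d) ∧
        p ∣ n := by
  rw [not_exists_conv_eq_delta_iff]
  constructor
  · rintro ⟨W, hW, hVW⟩
    have hL : Periodic (fun i : ℕ => W i) n := fun i => by simp
    obtain ⟨p, hp, hLp, hmin, hpn⟩ := hL.exists_minimal_period_dvd (NeZero.pos n)
    refine ⟨fun i => W i, p, hp, fun h => hW ?_,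
      (conv_eq_zero_iff_satisfiesRecurrence hmono hlt hV fun _ => rfl).1 hVW, hLp, hmin, hpn⟩
    funext s
    simpa using congrFun h s.val
  · rintro ⟨L, p, -, hL, hrec, hLp, -, ⟨k, rfl⟩⟩
    have hLn : Periodic L (p * k) := by simpa [mul_comm] using Periodic.nat_mul hLp k
    have hWL : ∀ i : ℕ, L (i : ZMod (p * k)).val = L i := fun i => by
      rw [ZMod.val_natCast, hLn.map_mod_nat]
    refine ⟨fun s => L s.val, fun h => hL ?_,
      (conv_eq_zero_iff_satisfiesRecurrence hmono hlt hV hWL).2 hrec⟩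
    funext i
    simpa only [hWL, Pi.zero_apply] using congrFun h i
end

section
/- For the block collection C = (0,1,...,h) with h ≥ 1, the recurrence L(i) = Σ_{k=1}^{h} L(i-k) (mod 2) admits a nonzero purely periodic solution with minimal period exactly d, for every divisor d of h+1 satisfying: d > 1 if h is even; and d ≠ 2 if d = 2 would require 4 ∤ (h+1) (i.e., period 2 exists iff 4 | h+1). -/
/-!
In characteristic 2 the recurrence says exactly that every window of `h + 1` consecutive
terms sums to zero. For a `d`-periodic sequence with `d ∣ h + 1` each such window is
`(h + 1) / d` copies of one period, so it suffices that `(h + 1) / d` times the period sum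
vanishes. Repeating the word `1^k 0^(d-k)` (minimal period `d` when `0 < k < d`, period sum
`k`) does this with `k = 2` for `d ≥ 3`, with `k = 1` for `d = 2` since `4 ∣ h + 1`, and with
the constant sequence `1` for `d = 1` since `h` is odd.
-/

open Finset Function

section WindowSum

variable {M : Type*} [AddCommMonoid M] {L : ℕ → M}

theorem Function.Periodic.sum_range_add {m : ℕ} (hL : Periodic L m) (a : ℕ) :
    ∑ j ∈ range m, L (a + j) = ∑ j ∈ range m, L j := by
  induction a with
  | zero => simp
  | succ a ih =>
    rw [← ih]
    rcases m with _ | m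
    · simp
    · rw [sum_range_succ, sum_range_succ', show a + 1 + m = a + (m + 1) by omega, hL, add_zero]
      simp only [add_right_comm a 1, add_assoc]

theorem Function.Periodic.sum_range_mul {d : ℕ} (hL : Periodic L d) (n : ℕ) :
    ∑ j ∈ range (n * d), L j = n • ∑ j ∈ range d, L j := by
  induction n with
  | zero => simp
  | succ n ih => rw [Nat.succ_mul, Finset.sum_range_add, ih, hL.sum_range_add, succ_nsmul]

theorem sum_Icc_one_add_apply_zero (f : ℕ → M) (h : ℕ) :
    ∑ k ∈ Icc 1 h, f k + f 0 = ∑ k ∈ range (h + 1), f k := by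
  rw [sum_range_succ', ← Ico_add_one_right_eq_Icc, sum_Ico_eq_sum_range]
  simp [add_comm 1]

end WindowSum

theorem recurrence_of_periodic {R : Type*} [Ring R] [CharP R 2] {L : ℕ → R} {h d : ℕ}
    (hL : Periodic L d) (hdvd : d ∣ h + 1)
    (hsum : ((h + 1) / d) • ∑ j ∈ range d, L j = 0) (i : ℕ) (hi : h ≤ i) :
    L i = ∑ k ∈ Icc 1 h, L (i - k) := by
  have hwindow : ∑ j ∈ range (h + 1), L (i - h + j) = 0 := by
    have hL' := hL.nat_mul ((h + 1) / d)
    rw [Nat.cast_id, Nat.div_mul_cancel hdvd] at hL'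
    rw [hL'.sum_range_add, ← Nat.div_mul_cancel hdvd, hL.sum_range_mul, hsum]
  have hreflect : ∑ j ∈ range (h + 1), L (i - h + j) = ∑ k ∈ range (h + 1), L (i - k) := by
    rw [← sum_range_reflect]
    exact sum_congr rfl fun k hk => by rw [mem_range] at hk; congr 1; omega
  rw [hreflect, ← sum_Icc_one_add_apply_zero, Nat.sub_zero] at hwindow
  rw [← CharTwo.neg_eq (L i), eq_comm]
  exact eq_neg_of_add_eq_zero_left hwindow

section PeriodicBlock

def periodicBlock (d k i : ℕ) : ZMod 2 := if i % d < k then 1 else 0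

variable {d k : ℕ}

theorem periodicBlock_periodic (d k : ℕ) : Periodic (periodicBlock d k) d := fun i => by
  simp [periodicBlock]

theorem periodicBlock_eq_one_iff {i : ℕ} : periodicBlock d k i = 1 ↔ i % d < k := by
  unfold periodicBlock; split_ifs <;> simp [*]

theorem periodicBlock_ne_zero (hk : 0 < k) : periodicBlock d k ≠ 0 := fun h => by
  simpa [periodicBlock, hk] using congrFun h 0

theorem sum_range_periodicBlock (hk : k ≤ d) : ∑ j ∈ range d, periodicBlock d k j = k := by
  have hfilter : {j ∈ range d | j < k} = range k := by ext; simp; omega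
  calc ∑ j ∈ range d, periodicBlock d k j = ∑ j ∈ range d, if j < k then 1 else 0 :=
        sum_congr rfl fun j hj => by rw [periodicBlock, Nat.mod_eq_of_lt (mem_range.1 hj)]
    _ = k := by rw [sum_boole, hfilter, card_range]

/-- A shorter period `p` would carry the `1` at position `d` back to `d - p` and the `0` at
position `d - 1` back to `d - 1 - p`, which is impossible. -/
theorem le_of_periodic_periodicBlock {p : ℕ} (hk : 0 < k) (hkd : k < d) (hp : 0 < p)
    (hper : Periodic (periodicBlock d k) p) : d ≤ p := by
  by_contra! hpd
  have hone : (d - p) % d < k := by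
    rw [← periodicBlock_eq_one_iff, ← hper, Nat.sub_add_cancel hpd.le, periodicBlock_eq_one_iff,
      Nat.mod_self]
    exact hk
  have hzero : ¬ (d - 1 - p) % d < k := by
    rw [← periodicBlock_eq_one_iff, ← hper, Nat.sub_add_cancel (by omega),
      periodicBlock_eq_one_iff, Nat.mod_eq_of_lt (by omega)]
    omega
  rw [Nat.mod_eq_of_lt (by omega)] at hone hzero
  omega

end PeriodicBlock

theorem stmt9_general (h d : ℕ) (hd : 0 < d) (hdvd : d ∣ (h + 1))
    (hev : Even h → 1 < d) (h2 : d = 2 → 4 ∣ (h + 1)) :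
    ∃ L : ℕ → ZMod 2,
      (∀ i, h ≤ i → L i = ∑ k ∈ Finset.Icc 1 h, L (i - k)) ∧
      L ≠ 0 ∧
      (∀ i, L (i + d) = L i) ∧
      ∀ d', 0 < d' → (∀ i, L (i + d') = L i) → d ≤ d' := by
  obtain ⟨k, hk, hkd, hmin, hpar⟩ :
      ∃ k, 0 < k ∧ k ≤ d ∧ (k < d ∨ d = 1) ∧ 2 ∣ (h + 1) / d * k := by
    rcases (by omega : d = 1 ∨ d = 2 ∨ 3 ≤ d) with rfl | rfl | hd3
    · have hodd : Odd h := Nat.not_even_iff_odd.mp (mt hev (lt_irrefl 1))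
      exact ⟨1, one_pos, le_rfl, Or.inr rfl, by simpa using hodd.add_one.two_dvd⟩
    · exact ⟨1, one_pos, one_le_two, Or.inl one_lt_two, by have := h2 rfl; omega⟩
    · exact ⟨2, two_pos, by omega, Or.inl (by omega), dvd_mul_left 2 _⟩
  have hsum : ((h + 1) / d) • ∑ j ∈ range d, periodicBlock d k j = 0 := by
    rwa [sum_range_periodicBlock hkd, nsmul_eq_mul, ← Nat.cast_mul, ZMod.natCast_eq_zero_iff]
  refine ⟨periodicBlock d k, recurrence_of_periodic (periodicBlock_periodic d k) hdvd hsum,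
    periodicBlock_ne_zero hk, periodicBlock_periodic d k, fun p hp hper => ?_⟩
  rcases hmin with hkd | rfl
  · exact le_of_periodic_periodicBlock hk hkd hp hper
  · exact hp

theorem stmt9 (h d : ℕ) (hh : 1 ≤ h) (hd : 0 < d) (hdvd : d ∣ (h + 1))
    (hev : Even h → 1 < d) (h2 : d = 2 → 4 ∣ (h + 1)) :
    ∃ L : ℕ → ZMod 2,
      (∀ i, h ≤ i → L i = ∑ k ∈ Finset.Icc 1 h, L (i - k)) ∧
      L ≠ 0 ∧
      (∀ i, L (i + d) = L i) ∧
      ∀ d', 0 < d' → (∀ i, L (i + d') = L i) → d ≤ d' :=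
  stmt9_general h d hd hdvd hev h2
end

section
/- For the exponential collection E_n = (1, 2, 4, ..., 2^n), every nonzero purely periodic solution of the recurrence L(i) = Σ_{l=1}^{n} L(i - (2^l - 1)) (mod 2) has period length dividing a divisor of 2^{n+1} - 1; in particular every element of the spectrum kernel of E_n divides 2^{n+1} - 1. -/
/-!
With `S` the shift `L ↦ L (· + 1)`, the recurrence says `P(S) L = 0` for
`P(x) = ∑_{l=0}^{n} x^(2^n - 2^l)`. In characteristic 2 squaring is additive, so also
`P(x)^2 = P(x^2)` annihilates `L`, and `P(x)^2 + x^(2^n) P(x)` telescopes to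
`1 + x^(2^(n+1) - 1)`. Hence `2^(n+1) - 1` is a period of `L`, and the minimal period
divides every period.
-/

open Finset

lemma Function.Periodic.dvd_of_minimal {α : Type*} {f : ℕ → α} {p d : ℕ} (hp : 0 < p)
    (hf : Periodic f p) (hmin : ∀ d, 0 < d → Periodic f d → p ≤ d) (hd : Periodic f d) :
    p ∣ d := by
  refine Nat.dvd_of_mod_eq_zero (Nat.eq_zero_of_not_pos fun hpos => ?_)
  have hmod : Periodic f (d % p) := fun i => by
    rw [← hf.nat_mul (d / p) (i + d % p), Nat.cast_id, add_assoc, mul_comm, Nat.mod_add_div, hd]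
  exact absurd (hmin _ hpos hmod) (not_le.2 (Nat.mod_lt d hp))

namespace CharTwo

variable {R ι : Type*}

lemma sum_sum_eq_sum_diag [Semiring R] [CharP R 2] (s : Finset ι) (f : ι → ι → R)
    (hf : ∀ a b, f a b = f b a) : ∑ a ∈ s, ∑ b ∈ s, f a b = ∑ a ∈ s, f a a := by
  classical
  induction s using Finset.induction_on with
  | empty => simp
  | insert c s hc ih =>
    simp only [sum_insert hc, sum_add_distrib, ih]
    rw [sum_congr rfl fun b _ => hf b c]
    simp only [add_assoc, CharTwo.add_cancel_left]

lemma sum_add_two_mul_eq_zero [Semiring R] [CharP R 2] {L : ℕ → R} (s : Finset ι)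
    (e : ι → ℕ) (h : ∀ j, ∑ a ∈ s, L (j + e a) = 0) (j : ℕ) :
    ∑ a ∈ s, L (j + 2 * e a) = 0 :=
  calc ∑ a ∈ s, L (j + 2 * e a) = ∑ a ∈ s, ∑ b ∈ s, L (j + e a + e b) := by
        rw [sum_sum_eq_sum_diag s _ fun a b => by rw [add_right_comm]]
        simp only [two_mul, add_assoc]
    _ = 0 := sum_eq_zero fun a _ => h (j + e a)

end CharTwo

section ExponentialCollection

variable {R : Type*} [Ring R] [CharP R 2] {n : ℕ} {L : ℕ → R}

lemma sum_range_add_two_pow_sub_two_pow_eq_zero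
    (hrec : ∀ i, 2 ^ n - 1 ≤ i → L i = ∑ l ∈ Icc 1 n, L (i - (2 ^ l - 1))) (j : ℕ) :
    ∑ l ∈ range (n + 1), L (j + (2 ^ n - 2 ^ l)) = 0 := by
  have hrec_j : L (j + (2 ^ n - 1)) = ∑ l ∈ Icc 1 n, L (j + (2 ^ n - 2 ^ l)) := by
    rw [hrec _ (Nat.le_add_left _ _)]
    refine sum_congr rfl fun l hl => congrArg L ?_
    have hl_le : 2 ^ l ≤ 2 ^ n := Nat.pow_le_pow_right two_pos (mem_Icc.1 hl).2
    have hl_pos : 1 ≤ 2 ^ l := Nat.one_le_two_pow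
    omega
  rw [range_eq_Ico, sum_eq_sum_Ico_succ_bot n.add_one_pos, zero_add, Ico_add_one_right_eq_Icc,
    pow_zero, ← hrec_j, CharTwo.add_self_eq_zero]

lemma periodic_two_pow_succ_sub_one
    (h : ∀ j, ∑ l ∈ range (n + 1), L (j + (2 ^ n - 2 ^ l)) = 0) :
    Function.Periodic L (2 ^ (n + 1) - 1) := by
  intro j
  have hsq := CharTwo.sum_add_two_mul_eq_zero _ _ h j
  have hshift := h (j + 2 ^ n)
  have htelescope : ∑ l ∈ range (n + 1), L (j + 2 * (2 ^ n - 2 ^ l)) +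
      ∑ l ∈ range (n + 1), L (j + 2 ^ n + (2 ^ n - 2 ^ l)) = L j + L (j + (2 ^ (n + 1) - 1)) := by
    have hmid : ∑ l ∈ range n, L (j + 2 * (2 ^ n - 2 ^ l)) =
        ∑ l ∈ range n, L (j + 2 ^ n + (2 ^ n - 2 ^ (l + 1))) := by
      refine sum_congr rfl fun l hl => congrArg L ?_
      have hl_le : 2 ^ (l + 1) ≤ 2 ^ n := Nat.pow_le_pow_right two_pos (mem_range.1 hl)
      rw [pow_succ] at hl_le ⊢
      omega
    have hlast : j + 2 ^ n + (2 ^ n - 2 ^ 0) = j + (2 ^ (n + 1) - 1) := by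
      rw [pow_succ, pow_zero]
      omega
    rw [sum_range_succ, sum_range_succ', hmid, hlast, Nat.sub_self, mul_zero, add_zero,
      add_add_add_comm, CharTwo.add_self_eq_zero, zero_add]
  rw [hsq, hshift, add_zero, eq_comm, CharTwo.add_eq_zero] at htelescope
  exact htelescope.symm

end ExponentialCollection

theorem stmt15_general (n p : ℕ) (L : ℕ → ZMod 2)
    (hrec : ∀ i, 2 ^ n - 1 ≤ i →
      L i = ∑ l ∈ Finset.Icc 1 n, L (i - (2 ^ l - 1)))
    (hp : 0 < p) (hper : ∀ i, L (i + p) = L i)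
    (hmin : ∀ d, 0 < d → (∀ i, L (i + d) = L i) → p ≤ d) :
    p ∣ 2 ^ (n + 1) - 1 :=
  Function.Periodic.dvd_of_minimal hp hper hmin
    (periodic_two_pow_succ_sub_one (sum_range_add_two_pow_sub_two_pow_eq_zero hrec))

theorem stmt15 (n p : ℕ) (hn : 1 ≤ n) (L : ℕ → ZMod 2) (hL : L ≠ 0)
    (hrec : ∀ i, 2 ^ n - 1 ≤ i →
      L i = ∑ l ∈ Finset.Icc 1 n, L (i - (2 ^ l - 1)))
    (hp : 0 < p) (hper : ∀ i, L (i + p) = L i)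
    (hmin : ∀ d, 0 < d → (∀ i, L (i + d) = L i) → p ≤ d) :
    p ∣ 2 ^ (n + 1) - 1 :=
  stmt15_general n p L hrec hp hper hmin
end
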